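/- Let f be a Schur-convex function on probability distributions on k elements, let δ ≥ 0, and let p and q be probability distributions on k elements with non-increasingly ordered entries such that p ≻ q. Then f(p̄^(δ)) ≥ f(q̄^(δ)) and f(p̲^(δ)) ≥ f(q̲^(δ)), where p̄^(δ), q̄^(δ) are the steepest δ-approximations and p̲^(δ), q̲^(δ) the flattest δ-approximations; that is, the smoothed versions f̄^(δ) and f̲^(δ) of f are monotonic under the majorization order. -/

import Mathlib

open Finset

noncomputable section

/-- The ℓ¹ distance `‖a − b‖ = Σᵢ |aᵢ − bᵢ|` between two vectors in `ℝ^k`. -/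
def l1dist {k : ℕ} (a b : Fin k → ℝ) : ℝ := ∑ i, |a i - b i|

/-- A probability distribution on `k` elements: nonnegative entries summing to 1. -/
def IsProbDist {k : ℕ} (p : Fin k → ℝ) : Prop := (∀ i, 0 ≤ p i) ∧ ∑ i, p i = 1

/-- The vector `a` rearranged in non-increasing order, `a↓`. -/
def descSort {k : ℕ} (a : Fin k → ℝ) : Fin k → ℝ := fun i => a (Tuple.sort a i.rev)

/-- The sum of the first `l` entries of `a` (1-based indexing: entries `1,…,l`). -/
def psum {k : ℕ} (a : Fin k → ℝ) (l : ℕ) : ℝ :=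
  ∑ i ∈ univ.filter (fun i : Fin k => (i : ℕ) < l), a i

/-- The sum of the entries of `a` from position `l` to `k` (1-based indexing). -/
def tailSum {k : ℕ} (a : Fin k → ℝ) (l : ℕ) : ℝ :=
  ∑ i ∈ univ.filter (fun i : Fin k => l ≤ (i : ℕ) + 1), a i

/-- `a` majorizes `b` (`a ≻ b`): the total sums agree and all partial sums of the
non-increasing rearrangements satisfy `Σ_{i=1}^l a↓ᵢ ≥ Σ_{i=1}^l b↓ᵢ` for `l = 1,…,k`. -/
def Majorizes {k : ℕ} (a b : Fin k → ℝ) : Prop :=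
  (∑ i, a i = ∑ i, b i) ∧
  ∀ l : ℕ, 1 ≤ l → l ≤ k → psum (descSort b) l ≤ psum (descSort a) l

/-- The distribution `e₁ = (1,0,…,0)`. -/
def e1 (k : ℕ) : Fin k → ℝ := fun i => if (i : ℕ) = 0 then 1 else 0

/-- The uniform distribution `η = (1/k,…,1/k)`. -/
def unif (k : ℕ) : Fin k → ℝ := fun _ => (k : ℝ)⁻¹

/-- The unnormalised vector `r` in the construction of the steepest approximation:
`r₁ = p₁ + δ/2`, `rᵢ = pᵢ` otherwise. -/
def steepR {k : ℕ} (δ : ℝ) (p : Fin k → ℝ) : Fin k → ℝ :=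
  fun i => if (i : ℕ) = 0 then p i + δ / 2 else p i

/-- `lstar ∈ {1,…,k}` is the truncation index of the steepest `δ`-approximation of `p`:
`Σ_{i=1}^{l*} rᵢ ≤ 1 < Σ_{i=1}^{l*+1} rᵢ` (the second sum being meaningful for `l* < k`). -/
def IsTruncIdx {k : ℕ} (δ : ℝ) (p : Fin k → ℝ) (lstar : ℕ) : Prop :=
  1 ≤ lstar ∧ lstar ≤ k ∧ psum (steepR δ p) lstar ≤ 1 ∧
    (lstar < k → 1 < psum (steepR δ p) (lstar + 1))

/-- `pbar` is the steepest `δ`-approximation `p̄^(δ)` of `p` (assumed non-increasingly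
ordered): if `‖p − e₁‖ ≤ δ` then `pbar = e₁`; otherwise `pbar` agrees with `r` on the
first `l*` entries, has `1 − Σ_{i=1}^{l*} rᵢ` at position `l*+1`, and `0` afterwards. -/
def IsSteepest {k : ℕ} (δ : ℝ) (p pbar : Fin k → ℝ) : Prop :=
  (l1dist p (e1 k) ≤ δ ∧ pbar = e1 k) ∨
  (δ < l1dist p (e1 k) ∧ ∃ lstar : ℕ, IsTruncIdx δ p lstar ∧
    ∀ i : Fin k, pbar i =
      if (i : ℕ) < lstar then steepR δ p i
      else if (i : ℕ) = lstar then 1 - psum (steepR δ p) lstar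
      else 0)

/-- `ε(x) = Σ_{i : pᵢ ≥ x} (pᵢ − x)`. -/
def epsFn {k : ℕ} (p : Fin k → ℝ) (x : ℝ) : ℝ :=
  ∑ i ∈ univ.filter (fun i : Fin k => x ≤ p i), (p i - x)

/-- `γ(y) = Σ_{i : pᵢ ≤ y} (y − pᵢ)`. -/
def gammaFn {k : ℕ} (p : Fin k → ℝ) (y : ℝ) : ℝ :=
  ∑ i ∈ univ.filter (fun i : Fin k => p i ≤ y), (y - p i)

/-- `pflat` is the flattest `δ`-approximation of `p` built from the cutting level `x*` and
the filling level `y*`: `x*, y* ∈ [0,1]`, `ε(x*) = γ(y*) = δ/2`, and `pflat` equals `x*`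
where `pᵢ ≥ x*`, equals `y*` where `pᵢ ≤ y*`, and equals `pᵢ` otherwise. -/
def IsFlattestWith {k : ℕ} (δ : ℝ) (p pflat : Fin k → ℝ) (x y : ℝ) : Prop :=
  x ∈ Set.Icc (0 : ℝ) 1 ∧ y ∈ Set.Icc (0 : ℝ) 1 ∧
  epsFn p x = δ / 2 ∧ gammaFn p y = δ / 2 ∧
  ∀ i : Fin k, pflat i = if x ≤ p i then x else if p i ≤ y then y else p i

/-- `pflat` is the flattest `δ`-approximation `p̲^(δ)` of `p` (assumed non-increasingly
ordered): if `‖p − η‖ ≤ δ` then `pflat = η`; otherwise it is obtained by cutting at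
level `x*` and filling at level `y*`. -/
def IsFlattest {k : ℕ} (δ : ℝ) (p pflat : Fin k → ℝ) : Prop :=
  (l1dist p (unif k) ≤ δ ∧ pflat = unif k) ∨
  (δ < l1dist p (unif k) ∧ ∃ x y : ℝ, IsFlattestWith δ p pflat x y)

end

/-!
The steepest approximation of `p` is the greedy truncation to total mass 1 of
`r = p + (δ/2) e₁`, so its partial sums are `min 1 (Σ_{i ≤ l} pᵢ + δ/2)`, which are monotone in
the partial sums of `p`.

For the flattest approximation we use the Hardy–Littlewood–Pólya description of majorization:
for non-increasing vectors of equal sum, `a ≻ b` iff `Σᵢ (bᵢ - t)⁺ ≤ Σᵢ (aᵢ - t)⁺` for every `t`.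
Away from the uniform case, the flattest approximation is `p` clamped to `[y*, x*]`, and its
excess function is `t ↦ max (Σᵢ (pᵢ - t)⁺ - δ/2) (Σᵢ (1/k - t)⁺)`, which is again monotone in the
excess function of `p`. In both cases `p ≻ q` passes to the approximations, and Schur convexity
of `f` concludes.
-/

open Finset

variable {k : ℕ}

lemma IsProbDist.card_pos {p : Fin k → ℝ} (hp : IsProbDist p) : 0 < k := by
  rcases Nat.eq_zero_or_pos k with rfl | hk
  · simpa using hp.2
  · exact hk

section PartialSums

lemma psum_zero (a : Fin k → ℝ) : psum a 0 = 0 := by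
  simp [psum]

lemma psum_of_le (a : Fin k → ℝ) {l : ℕ} (hl : k ≤ l) : psum a l = ∑ i, a i := by
  rw [psum, filter_true_of_mem fun i _ => i.isLt.trans_le hl]

lemma psum_succ (a : Fin k → ℝ) (i : Fin k) : psum a (i + 1) = psum a i + a i := by
  have : univ.filter (fun j : Fin k => (j : ℕ) < i + 1)
      = insert i (univ.filter fun j : Fin k => (j : ℕ) < i) := by
    ext j
    simp only [mem_filter, mem_univ, true_and, mem_insert, Fin.ext_iff]
    omega
  rw [psum, this, sum_insert (by simp), add_comm, psum]

lemma monotone_psum {a : Fin k → ℝ} (ha : ∀ i, 0 ≤ a i) : Monotone (psum a) := fun l m hlm =>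
  sum_le_sum_of_subset_of_nonneg (fun i => by simp only [mem_filter, mem_univ, true_and]; omega)
    fun i _ _ => ha i

lemma psum_sub_mul_eq_sum {a : Fin k → ℝ} (t : ℝ) {l : ℕ} (hl : l ≤ k) :
    psum a l - l * t = ∑ i ∈ univ.filter (fun i : Fin k => (i : ℕ) < l), (a i - t) := by
  rw [sum_sub_distrib, sum_const, Fin.card_filter_val_lt, min_eq_right hl, nsmul_eq_mul, psum]

lemma descSort_eq_self {a : Fin k → ℝ} (ha : Antitone a) : descSort a = a := by
  have hmono : Monotone (a ∘ (Fin.revPerm : Equiv.Perm (Fin k))) := fun i j hij =>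
    ha (by simpa [Fin.rev_le_rev] using hij)
  have hsort := Tuple.comp_perm_comp_sort_eq_comp_sort (σ := Fin.revPerm) (f := a)
  rw [Tuple.sort_eq_refl_iff_monotone.mpr hmono] at hsort
  funext i
  simpa [descSort, Fin.rev_rev] using (congrFun hsort i.rev).symm

lemma majorizes_iff_of_antitone {a b : Fin k → ℝ} (ha : Antitone a) (hb : Antitone b) :
    Majorizes a b ↔
      (∑ i, a i = ∑ i, b i) ∧ ∀ l : ℕ, 1 ≤ l → l ≤ k → psum b l ≤ psum a l := by
  rw [Majorizes, descSort_eq_self ha, descSort_eq_self hb]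

end PartialSums

section Excess

def excess (a : Fin k → ℝ) (t : ℝ) : ℝ := ∑ i, (a i - t)⁺

lemma excess_nonneg (a : Fin k → ℝ) (t : ℝ) : 0 ≤ excess a t :=
  sum_nonneg fun _ _ => posPart_nonneg _

lemma excess_antitone (a : Fin k → ℝ) : Antitone (excess a) := fun _ _ hst =>
  sum_le_sum fun _ _ => posPart_mono (sub_le_sub_left hst _)

lemma epsFn_eq_excess (p : Fin k → ℝ) (x : ℝ) : epsFn p x = excess p x := by
  simp only [epsFn, excess, sum_filter, posPart_eq_ite, sub_nonneg]

lemma gammaFn_eq_excess_neg (p : Fin k → ℝ) (y : ℝ) : gammaFn p y = excess (-p) (-y) := by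
  simp only [gammaFn, excess, sum_filter, posPart_eq_ite, Pi.neg_apply, neg_sub_neg, sub_nonneg]

lemma excess_sub_excess_neg (a : Fin k → ℝ) (t : ℝ) :
    excess a t - excess (-a) (-t) = ∑ i, a i - k * t := by
  simp only [excess, Pi.neg_apply, neg_sub_neg, ← neg_sub (a _) t, posPart_neg, ← sum_sub_distrib,
    posPart_sub_negPart]
  rw [sum_sub_distrib, sum_const, card_univ, Fintype.card_fin, nsmul_eq_mul]

lemma l1dist_comm (a b : Fin k → ℝ) : l1dist a b = l1dist b a := by
  simp only [l1dist, abs_sub_comm]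

lemma l1dist_eq_two_mul_sum_posPart {a b : Fin k → ℝ} (h : ∑ i, a i = ∑ i, b i) :
    l1dist a b = 2 * ∑ i, (a i - b i)⁺ := by
  have hzero : ∑ i, (a i - b i) = 0 := by rw [sum_sub_distrib, h, sub_self]
  rw [l1dist, ← add_zero (∑ i, |a i - b i|), ← hzero, ← sum_add_distrib, mul_sum]
  simp only [abs_add_eq_two_nsmul_posPart, nsmul_eq_mul, Nat.cast_ofNat]

lemma excess_sub_excess_le {a b : Fin k → ℝ} (h : ∑ i, a i = ∑ i, b i) (t : ℝ) :
    excess a t - excess b t ≤ l1dist a b / 2 := by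
  rw [l1dist_eq_two_mul_sum_posPart h, mul_div_cancel_left₀ _ two_ne_zero, excess, excess,
    ← sum_sub_distrib]
  exact sum_le_sum fun i _ => by simp only [posPart_def]; grind

lemma sum_sub_le_excess {a b : Fin k → ℝ} (h : ∑ i, a i = ∑ i, b i) (t : ℝ) :
    ∑ i, (b i - t) ≤ excess a t := by
  rw [sum_sub_distrib, ← h, ← sum_sub_distrib]
  exact sum_le_sum fun i _ => le_posPart _

lemma sum_unif (hk : k ≠ 0) : ∑ i, unif k i = 1 := by
  simp [unif, hk]

lemma excess_unif_le {b : Fin k → ℝ} (hb : ∑ i, b i = 1) (t : ℝ) :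
    excess (unif k) t ≤ excess b t := by
  have hk : k ≠ 0 := by rintro rfl; simp at hb
  rcases le_or_gt t (k : ℝ)⁻¹ with ht | ht
  · calc excess (unif k) t = ∑ i, (unif k i - t) :=
          sum_congr rfl fun i _ => posPart_eq_self.2 (sub_nonneg.2 ht)
      _ ≤ excess b t := sum_sub_le_excess (hb.trans (sum_unif hk).symm) t
  · refine (sum_eq_zero fun i _ => ?_).trans_le (excess_nonneg b t)
    exact posPart_eq_zero.2 (sub_nonpos.2 ht.le)

lemma psum_le_mul_add_excess (a : Fin k → ℝ) (t : ℝ) {l : ℕ} (hl : l ≤ k) :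
    psum a l ≤ l * t + excess a t := by
  rw [← sub_le_iff_le_add', psum_sub_mul_eq_sum t hl]
  calc ∑ i ∈ univ.filter (fun i : Fin k => (i : ℕ) < l), (a i - t)
      ≤ ∑ i ∈ univ.filter (fun i : Fin k => (i : ℕ) < l), (a i - t)⁺ :=
        sum_le_sum fun i _ => le_posPart _
    _ ≤ excess a t :=
        sum_le_sum_of_subset_of_nonneg (filter_subset _ _) fun _ _ _ => posPart_nonneg _

lemma psum_eq_mul_add_excess {a : Fin k → ℝ} {t : ℝ} {l : ℕ} (hl : l ≤ k)
    (hlt : ∀ i : Fin k, (i : ℕ) < l → t ≤ a i) (hge : ∀ i : Fin k, l ≤ i → a i ≤ t) :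
    psum a l = l * t + excess a t := by
  rw [excess, ← sum_filter_add_sum_filter_not univ (fun i : Fin k => (i : ℕ) < l),
    sum_congr rfl fun i hi => posPart_eq_self.2 (sub_nonneg.2 (hlt i (mem_filter.1 hi).2)),
    sum_eq_zero fun i hi => posPart_eq_zero.2 (sub_nonpos.2 (hge i (not_lt.1 (mem_filter.1 hi).2))),
    ← psum_sub_mul_eq_sum t hl]
  ring

lemma excess_le_excess_of_psum_le {a b : Fin k → ℝ} (hb : Antitone b)
    (h : ∀ l : ℕ, 1 ≤ l → l ≤ k → psum b l ≤ psum a l) (t : ℝ) : excess b t ≤ excess a t := by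
  classical
  set l := #{i : Fin k | t < b i}
  have hl : l ≤ k := (card_filter_le _ _).trans_eq (card_fin k)
  have hmem : ∀ i : Fin k, (i : ℕ) < l ↔ t < b i := fun i =>
    Fin.lt_card_filter_univ_iff_apply_of_imp _ fun _ _ hji hi => hi.trans_le (hb hji)
  have hb_eq := psum_eq_mul_add_excess hl (fun i hi => ((hmem i).1 hi).le)
    fun i hi => not_lt.1 ((hmem i).not.1 (not_lt.2 hi))
  rcases Nat.eq_zero_or_pos l with h0 | h0
  · rw [h0, psum_zero, Nat.cast_zero, zero_mul, zero_add] at hb_eq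
    linarith [excess_nonneg a t]
  · linarith [h l h0 hl, psum_le_mul_add_excess a t hl]

lemma psum_le_psum_of_excess_le {a b : Fin k → ℝ} (ha : Antitone a)
    (h : ∀ t, excess b t ≤ excess a t) {l : ℕ} (hl : 1 ≤ l) (hlk : l ≤ k) :
    psum b l ≤ psum a l := by
  set t := a ⟨l - 1, by omega⟩
  have ha_eq : psum a l = l * t + excess a t :=
    psum_eq_mul_add_excess hlk (fun i hi => ha (Fin.le_def.2 (by dsimp only; omega)))
      fun i hi => ha (Fin.le_def.2 (by dsimp only; omega))
  linarith [psum_le_mul_add_excess b t hlk, h t]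

end Excess

section Steepest

variable {δ : ℝ} {p pbar r : Fin k → ℝ}

/-- Spends the budget `c` on the entries of `r` in order. -/
def truncMass (c : ℝ) (r : Fin k → ℝ) : Fin k → ℝ := fun i => min (r i) (c - psum r i)⁺

lemma truncMass_nonneg {c : ℝ} (hr : ∀ i, 0 ≤ r i) (i : Fin k) : 0 ≤ truncMass c r i :=
  le_min (hr i) (posPart_nonneg _)

lemma antitone_truncMass {c : ℝ} (hr : ∀ i, 0 ≤ r i) (hr' : Antitone r) :
    Antitone (truncMass c r) :=
  hr'.min fun _ _ hij => posPart_mono (sub_le_sub_left (monotone_psum hr (Fin.le_def.1 hij)) c)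

lemma psum_truncMass {c : ℝ} (hc : 0 ≤ c) (hr : ∀ i, 0 ≤ r i) :
    ∀ l ≤ k, psum (truncMass c r) l = min c (psum r l)
  | 0, _ => by simp [psum_zero, hc]
  | l + 1, hl => by
    have hrl := hr ⟨l, hl⟩
    rw [psum_succ _ ⟨l, hl⟩, psum_succ _ ⟨l, hl⟩, psum_truncMass hc hr l (by omega), truncMass]
    simp only [posPart_def]
    grind

lemma isProbDist_truncMass (hr : ∀ i, 0 ≤ r i) (h : 1 ≤ ∑ i, r i) :
    IsProbDist (truncMass 1 r) := by
  refine ⟨truncMass_nonneg hr, ?_⟩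
  rw [← psum_of_le _ le_rfl, psum_truncMass zero_le_one hr k le_rfl, psum_of_le _ le_rfl,
    min_eq_left h]

lemma truncMass_eq_e1 (hr : ∀ i, 0 ≤ r i) (hk : 0 < k) (h : 1 ≤ r ⟨0, hk⟩) :
    truncMass 1 r = e1 k := by
  funext i
  rcases Nat.eq_zero_or_pos i with hi | hi
  · obtain rfl : i = ⟨0, hk⟩ := Fin.ext hi
    simp [truncMass, e1, psum_zero, h]
  · have hsum : 1 ≤ psum r i := by
      calc 1 ≤ psum r 0 + r ⟨0, hk⟩ := by rw [psum_zero, zero_add]; exact h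
        _ = psum r 1 := (psum_succ r ⟨0, hk⟩).symm
        _ ≤ psum r i := monotone_psum hr hi
    simp [truncMass, e1, hi.ne', posPart_eq_zero.2 (sub_nonpos.2 hsum), hr i]

lemma truncMass_eq_of_psum {m : ℕ} (hr : ∀ i, 0 ≤ r i) (hle : psum r m ≤ 1)
    (hlt : m < k → 1 < psum r (m + 1)) (i : Fin k) :
    truncMass 1 r i =
      if (i : ℕ) < m then r i else if (i : ℕ) = m then 1 - psum r m else 0 := by
  have hsucc := psum_succ r i
  have hri := hr i
  rw [truncMass]
  rcases lt_trichotomy (i : ℕ) m with hi | hi | hi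
  · have : psum r (i + 1) ≤ psum r m := monotone_psum hr hi
    rw [if_pos hi, min_eq_left (by rw [posPart_eq_self.2 (by linarith)]; linarith)]
  · subst hi
    have := hlt i.isLt
    rw [if_neg (lt_irrefl _), if_pos rfl, posPart_eq_self.2 (sub_nonneg.2 hle),
      min_eq_right (by linarith)]
  · have : psum r (m + 1) ≤ psum r i := monotone_psum hr hi
    have := hlt (hi.trans i.isLt)
    rw [if_neg (by omega), if_neg (by omega), posPart_eq_zero.2 (by linarith), min_eq_right hri]

lemma steepR_nonneg (hδ : 0 ≤ δ) (hp : ∀ i, 0 ≤ p i) (i : Fin k) : 0 ≤ steepR δ p i := by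
  unfold steepR
  split_ifs <;> linarith [hp i]

lemma antitone_steepR (hδ : 0 ≤ δ) (hp : Antitone p) : Antitone (steepR δ p) := by
  intro i j hij
  have hij' : (i : ℕ) ≤ j := hij
  unfold steepR
  split_ifs <;> first | omega | linarith [hp hij]

lemma psum_steepR {l : ℕ} (hl : 1 ≤ l) (hlk : l ≤ k) :
    psum (steepR δ p) l = psum p l + δ / 2 := by
  have hsplit : ∀ i : Fin k, steepR δ p i = p i + if (i : ℕ) = 0 then δ / 2 else 0 := fun i => by
    unfold steepR
    split_ifs <;> ring
  rw [psum, sum_congr rfl fun i _ => hsplit i, sum_add_distrib, ← psum,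
    sum_eq_single_of_mem (⟨0, by omega⟩ : Fin k)
      (by simp only [mem_filter, mem_univ, true_and]; omega)
      fun j _ hj => if_neg fun h => hj (Fin.ext h), if_pos rfl]

lemma sum_e1 (hk : 0 < k) : ∑ i, e1 k i = 1 := by
  rw [sum_eq_single_of_mem (⟨0, hk⟩ : Fin k) (mem_univ _) fun j _ hj => ?_]
  · simp [e1]
  · exact if_neg fun h => hj (Fin.ext h)

lemma two_mul_one_sub_le_l1dist_e1 (hp : IsProbDist p) (hk : 0 < k) :
    2 * (1 - p ⟨0, hk⟩) ≤ l1dist p (e1 k) := by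
  rw [l1dist_comm, l1dist_eq_two_mul_sum_posPart (by rw [sum_e1 hk, hp.2])]
  gcongr
  calc 1 - p ⟨0, hk⟩ ≤ (e1 k ⟨0, hk⟩ - p ⟨0, hk⟩)⁺ := by simpa [e1] using le_posPart (1 - p ⟨0, hk⟩)
    _ ≤ ∑ i, (e1 k i - p i)⁺ :=
      single_le_sum (f := fun i => (e1 k i - p i)⁺) (fun _ _ => posPart_nonneg _) (mem_univ _)

lemma IsSteepest.eq_truncMass (hδ : 0 ≤ δ) (hp : IsProbDist p) (h : IsSteepest δ p pbar) :
    pbar = truncMass 1 (steepR δ p) := by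
  have hr := steepR_nonneg hδ hp.1
  rcases h with ⟨hd, rfl⟩ | ⟨-, m, ⟨-, -, hle, hlt⟩, hpbar⟩
  · have hk := hp.card_pos
    refine (truncMass_eq_e1 hr hk ?_).symm
    have := two_mul_one_sub_le_l1dist_e1 hp hk
    rw [steepR, if_pos rfl]
    linarith
  · exact funext fun i => (hpbar i).trans (truncMass_eq_of_psum hr hle hlt i).symm

lemma IsSteepest.isProbDist (hδ : 0 ≤ δ) (hp : IsProbDist p) (h : IsSteepest δ p pbar) :
    IsProbDist pbar := by
  have hk := hp.card_pos
  rw [h.eq_truncMass hδ hp]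
  refine isProbDist_truncMass (steepR_nonneg hδ hp.1) ?_
  rw [← psum_of_le _ le_rfl, psum_steepR hk le_rfl, psum_of_le _ le_rfl, hp.2]
  linarith

lemma IsSteepest.majorizes {q qbar : Fin k → ℝ} (hδ : 0 ≤ δ) (hp : IsProbDist p)
    (hq : IsProbDist q) (hpord : Antitone p) (hqord : Antitone q)
    (hpq : ∀ l : ℕ, 1 ≤ l → l ≤ k → psum q l ≤ psum p l)
    (hpbar : IsSteepest δ p pbar) (hqbar : IsSteepest δ q qbar) : Majorizes pbar qbar := by
  have hpsum := (hpbar.isProbDist hδ hp).2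
  have hqsum := (hqbar.isProbDist hδ hq).2
  rw [hpbar.eq_truncMass hδ hp] at hpsum ⊢
  rw [hqbar.eq_truncMass hδ hq] at hqsum ⊢
  refine (majorizes_iff_of_antitone (antitone_truncMass (steepR_nonneg hδ hp.1)
    (antitone_steepR hδ hpord)) (antitone_truncMass (steepR_nonneg hδ hq.1)
    (antitone_steepR hδ hqord))).2 ⟨hpsum.trans hqsum.symm, fun l hl hlk => ?_⟩
  rw [psum_truncMass zero_le_one (steepR_nonneg hδ hp.1) l hlk,
    psum_truncMass zero_le_one (steepR_nonneg hδ hq.1) l hlk, psum_steepR hl hlk,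
    psum_steepR hl hlk]
  exact min_le_min_left 1 (by linarith [hpq l hl hlk])

end Steepest

section Flattest

variable {δ x y : ℝ} {p pflat : Fin k → ℝ}

lemma excess_clamp_sub_le (a : Fin k → ℝ) (x y t : ℝ) :
    excess a t - excess a x ≤ excess (fun i => max y (min x (a i))) t := by
  rw [excess, excess, ← sum_sub_distrib]
  exact sum_le_sum fun i _ => by simp only [posPart_def]; grind

lemma excess_clamp_le {a b : Fin k → ℝ} (hyx : y ≤ x)
    (hsum : ∑ i, max y (min x (a i)) = ∑ i, b i) (t : ℝ) :
    excess (fun i => max y (min x (a i))) t ≤ max (excess a t - excess a x) (excess b t) := by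
  rcases lt_or_ge t y with hty | hyt
  · refine le_max_of_le_right (le_of_eq_of_le ?_ (sum_sub_le_excess hsum.symm t))
    exact sum_congr rfl fun i _ => posPart_eq_self.2 (sub_nonneg.2 (hty.le.trans (le_max_left _ _)))
  rcases le_or_gt x t with hxt | htx
  · refine le_max_of_le_right (le_of_eq_of_le ?_ (excess_nonneg b t))
    exact sum_eq_zero fun i _ =>
      posPart_eq_zero.2 (sub_nonpos.2 (max_le (hyx.trans hxt) ((min_le_left _ _).trans hxt)))
  · refine le_max_of_le_left (le_of_eq ?_)
    rw [excess, excess, excess, ← sum_sub_distrib]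
    exact sum_congr rfl fun i _ => by simp only [posPart_def]; grind

lemma IsFlattestWith.le (hp : IsProbDist p) (hd : δ < l1dist p (unif k))
    (h : IsFlattestWith δ p pflat x y) : y ≤ x := by
  obtain ⟨-, -, hx, hy, -⟩ := h
  have hk : k ≠ 0 := hp.card_pos.ne'
  have hl1 : l1dist p (unif k) = 2 * excess p (k : ℝ)⁻¹ :=
    l1dist_eq_two_mul_sum_posPart (hp.2.trans (sum_unif hk).symm)
  have hneg : excess (-p) (-(k : ℝ)⁻¹) = excess p (k : ℝ)⁻¹ := by
    have := excess_sub_excess_neg p (k : ℝ)⁻¹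
    rw [hp.2, mul_inv_cancel₀ (Nat.cast_ne_zero.2 hk), sub_self] at this
    linarith
  rw [epsFn_eq_excess] at hx
  rw [gammaFn_eq_excess_neg] at hy
  have hxk : (k : ℝ)⁻¹ < x := (excess_antitone p).reflect_lt (by linarith)
  have hyk : -(k : ℝ)⁻¹ < -y := (excess_antitone (-p)).reflect_lt (by linarith)
  linarith

lemma IsFlattestWith.eq_clamp (hyx : y ≤ x) (h : IsFlattestWith δ p pflat x y) :
    pflat = fun i => max y (min x (p i)) := by
  funext i
  rw [h.2.2.2.2 i]
  split_ifs <;> grind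

lemma IsFlattestWith.sum_eq (hp : IsProbDist p) (hyx : y ≤ x) (h : IsFlattestWith δ p pflat x y) :
    ∑ i, pflat i = 1 := by
  rw [h.eq_clamp hyx]
  obtain ⟨-, -, hx, hy, -⟩ := h
  rw [epsFn_eq_excess, excess] at hx
  rw [gammaFn_eq_excess_neg, excess] at hy
  simp only [Pi.neg_apply, neg_sub_neg] at hy
  have hclamp : ∀ i, max y (min x (p i)) = p i + (y - p i)⁺ - (p i - x)⁺ := fun i => by
    simp only [posPart_def]; grind
  rw [sum_congr rfl fun i _ => hclamp i, sum_sub_distrib, sum_add_distrib, hx, hy,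
    hp.2]
  ring

lemma IsFlattest.isProbDist (hp : IsProbDist p) (h : IsFlattest δ p pflat) : IsProbDist pflat := by
  rcases h with ⟨-, rfl⟩ | ⟨hd, x, y, hflat⟩
  · exact ⟨fun _ => inv_nonneg.2 k.cast_nonneg, sum_unif hp.card_pos.ne'⟩
  · have hyx := hflat.le hp hd
    refine ⟨fun i => ?_, hflat.sum_eq hp hyx⟩
    rw [hflat.eq_clamp hyx]
    exact hflat.2.1.1.trans (le_max_left _ _)

lemma IsFlattest.antitone (hp : IsProbDist p) (hpord : Antitone p) (h : IsFlattest δ p pflat) :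
    Antitone pflat := by
  rcases h with ⟨-, rfl⟩ | ⟨hd, x, y, hflat⟩
  · exact antitone_const
  · rw [hflat.eq_clamp (hflat.le hp hd)]
    exact fun i j hij => max_le_max le_rfl (min_le_min le_rfl (hpord hij))

lemma IsFlattest.excess_eq (hp : IsProbDist p) (h : IsFlattest δ p pflat) (t : ℝ) :
    excess pflat t = max (excess p t - δ / 2) (excess (unif k) t) := by
  have hunif := sum_unif (k := k) hp.card_pos.ne'
  rcases h with ⟨hd, rfl⟩ | ⟨hd, x, y, hflat⟩
  · refine (max_eq_right ?_).symm
    linarith [excess_sub_excess_le (hp.2.trans hunif.symm) t]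
  · have hyx := hflat.le hp hd
    have hsum := hflat.sum_eq hp hyx
    have hx : excess p x = δ / 2 := (epsFn_eq_excess p x).symm.trans hflat.2.2.1
    rw [hflat.eq_clamp hyx] at hsum ⊢
    rw [← hx]
    exact le_antisymm (excess_clamp_le hyx (hsum.trans hunif.symm) t)
      (max_le (excess_clamp_sub_le p x y t) (excess_unif_le hsum t))

lemma IsFlattest.majorizes {q qflat : Fin k → ℝ} (hp : IsProbDist p) (hq : IsProbDist q)
    (hpord : Antitone p) (hqord : Antitone q)
    (hpq : ∀ l : ℕ, 1 ≤ l → l ≤ k → psum q l ≤ psum p l)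
    (hpflat : IsFlattest δ p pflat) (hqflat : IsFlattest δ q qflat) : Majorizes pflat qflat := by
  have hpanti := hpflat.antitone hp hpord
  refine (majorizes_iff_of_antitone hpanti (hqflat.antitone hq hqord)).2
    ⟨(hpflat.isProbDist hp).2.trans (hqflat.isProbDist hq).2.symm,
      fun l hl hlk => psum_le_psum_of_excess_le hpanti (fun t => ?_) hl hlk⟩
  rw [hpflat.excess_eq hp, hqflat.excess_eq hq]
  exact max_le_max (sub_le_sub_right (excess_le_excess_of_psum_le hqord hpq t) _) le_rfl

end Flattest

/-- for a Schur-convex `f`, the smoothed versions `f̄^(δ)` and `f̲^(δ)` are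
monotonic under majorization: if `p ≻ q` then `f(p̄^(δ)) ≥ f(q̄^(δ))` and
`f(p̲^(δ)) ≥ f(q̲^(δ))`. -/
theorem smoothed_schurConvex_monotone {k : ℕ} (f : (Fin k → ℝ) → ℝ)
    (hf : ∀ a b : Fin k → ℝ, IsProbDist a → IsProbDist b → Majorizes a b → f b ≤ f a)
    (δ : ℝ) (hδ : 0 ≤ δ)
    (p q : Fin k → ℝ) (hp : IsProbDist p) (hq : IsProbDist q)
    (hpord : Antitone p) (hqord : Antitone q) (hmaj : Majorizes p q)
    (pbar qbar pflat qflat : Fin k → ℝ)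
    (hpbar : IsSteepest δ p pbar) (hqbar : IsSteepest δ q qbar)
    (hpflat : IsFlattest δ p pflat) (hqflat : IsFlattest δ q qflat) :
    f qbar ≤ f pbar ∧ f qflat ≤ f pflat := by
  have hpq := ((majorizes_iff_of_antitone hpord hqord).1 hmaj).2
  exact ⟨hf _ _ (hpbar.isProbDist hδ hp) (hqbar.isProbDist hδ hq)
      (hpbar.majorizes hδ hp hq hpord hqord hpq hqbar),
    hf _ _ (hpflat.isProbDist hp) (hqflat.isProbDist hq)
      (hpflat.majorizes hp hq hpord hqord hpq hqflat)⟩
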